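/- Let A₁, ..., A_m be n×n positive definite complex matrices. Then tr(|A₁ ⋯ A_m|) ≤ tr((A₁^m + ⋯ + A_m^m)/m). -/

import Mathlib

open Matrix
open scoped ComplexOrder Kronecker

/-- Functional calculus for Hermitian matrices: apply `f : ℝ → ℝ` to the eigenvalues in a
spectral decomposition (junk value `0` if the matrix is not Hermitian). -/
noncomputable def hermCFC {ι : Type*} [Fintype ι] [DecidableEq ι]
    (M : Matrix ι ι ℂ) (f : ℝ → ℝ) : Matrix ι ι ℂ :=
  if h : M.IsHermitian then h.cfc f else 0

/-- Eigenvalues of a Hermitian matrix listed in decreasing order: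
`eigDesc M j` is the `(j+1)`-th largest eigenvalue (junk value `0` if not Hermitian). -/
noncomputable def eigDesc {n : ℕ} (M : Matrix (Fin n) (Fin n) ℂ) : Fin n → ℝ :=
  if h : M.IsHermitian then fun j => h.eigenvalues (Tuple.sort h.eigenvalues j.rev) else 0

/-- Eigenvalues of a Hermitian matrix listed in increasing order:
`eigAsc M j` is the `(j+1)`-th smallest eigenvalue (junk value `0` if not Hermitian). -/
noncomputable def eigAsc {n : ℕ} (M : Matrix (Fin n) (Fin n) ℂ) : Fin n → ℝ :=
  if h : M.IsHermitian then fun j => h.eigenvalues (Tuple.sort h.eigenvalues j) else 0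

/-- The absolute value `|X| = (XᴴX)^(1/2)` of a matrix. -/
noncomputable def matAbs {n : ℕ} (X : Matrix (Fin n) (Fin n) ℂ) : Matrix (Fin n) (Fin n) ℂ :=
  (Matrix.posSemidef_conjTranspose_mul_self X).1.eigenvectorUnitary.1 *
    diagonal ((↑) ∘ (√·) ∘ (Matrix.posSemidef_conjTranspose_mul_self X).1.eigenvalues) *
    (star (Matrix.posSemidef_conjTranspose_mul_self X).1.eigenvectorUnitary : Matrix (Fin n) (Fin n) ℂ)

/-- The Loewner order: `X ≤ Y` iff `Y - X` is positive semidefinite. -/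
def loewnerLE {n : ℕ} (X Y : Matrix (Fin n) (Fin n) ℂ) : Prop := (Y - X).PosSemidef

/-!
Let `X = A₁ ⋯ A_m` and `Sᵢ = Aᵢ^{1/2}`. Since `X` is invertible there is a unitary `V` with
`V X = |X|`. Place the `2m` blocks `V S₁, S₁, S₂, S₂, …, S_m, S_m` on the cyclic superdiagonal of a
`2m × 2m` block matrix `B`. Then `B^{2m}` is block diagonal, its blocks being the cyclic rotations of
`V S₁ S₁ ⋯ S_m S_m = |X|`, so `tr B^{2m} = 2m tr |X|`; and `BᴴB` is block diagonal with blocks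
`A₁, A₁, …, A_m, A_m`, so `tr (BᴴB)^m = 2 ∑ tr Aᵢ^m`. It remains to show
`Re tr Z^{2k} ≤ tr (ZᴴZ)^k` for every square matrix `Z`. By Schur triangularization we may take `Z`
upper triangular; then `Re (Z_ii^{2k}) ≤ |Z_ii|^{2k} ≤ ((ZᴴZ)_ii)^k`, and the diagonal of the
positive matrix `ZᴴZ` is a doubly stochastic average of its eigenvalues, so by convexity of `x ↦ x^k`
the sum of the `k`-th powers of the diagonal is at most `tr (ZᴴZ)^k`.
-/

open scoped MatrixOrder

lemma ZMod.sum_comp_mk_val {M : Type*} [AddCommMonoid M] {N : ℕ} [NeZero N] (f : Fin N → M) :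
    ∑ i : ZMod N, f ⟨i.val, i.val_lt⟩ = ∑ j, f j := by
  obtain ⟨N, rfl⟩ : ∃ M, N = M + 1 := Nat.exists_eq_succ_of_ne_zero (NeZero.ne N)
  -- `ZMod (N + 1)` is `Fin (N + 1)` by definition
  rfl

lemma Fin.sum_divNat {M : Type*} [AddCommMonoid M] {m n : ℕ} (g : Fin m → M) :
    ∑ j : Fin (m * n), g j.divNat = n • ∑ i, g i := by
  have h : ∀ p : Fin m × Fin n, (finProdFinEquiv p).divNat = p.1 := fun p =>
    congrArg Prod.fst (finProdFinEquiv.symm_apply_apply p)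
  simp [← finProdFinEquiv.sum_comp, h, Fintype.sum_prod_type, Finset.smul_sum]

lemma List.prod_ofFn_divNat_two {R : Type*} [Monoid R] {m : ℕ} (S : Fin m → R) :
    (List.ofFn fun j : Fin (m * 2) => S j.divNat).prod = (List.ofFn fun i => S i * S i).prod := by
  rw [List.ofFn_mul, List.prod_flatten, List.map_ofFn]
  congr 1
  refine List.ofFn_inj.2 (funext fun i => ?_)
  have h : ∀ c (hc : c < m * 2), c / 2 = i → Fin.divNat ⟨c, hc⟩ = i := fun _ _ hc => Fin.ext hc
  simp (disch := omega) [List.ofFn_succ, h]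

namespace Matrix

section Triangular

variable {ι R : Type*} [Fintype ι] [LinearOrder ι]

lemma IsUpperTriangular.mul_apply_self [NonUnitalNonAssocSemiring R] {S T : Matrix ι ι R}
    (hS : S.IsUpperTriangular) (hT : T.IsUpperTriangular) (i : ι) :
    (S * T) i i = S i i * T i i := by
  rw [mul_apply]
  refine Finset.sum_eq_single i (fun p _ hp => ?_) (by simp)
  rcases lt_or_gt_of_ne hp with h | h
  · rw [hS h, zero_mul]
  · rw [hT h, mul_zero]

lemma IsUpperTriangular.pow_apply_self [DecidableEq ι] [Semiring R] {T : Matrix ι ι R}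
    (hT : T.IsUpperTriangular) (k : ℕ) (i : ι) : (T ^ k) i i = T i i ^ k := by
  induction k with
  | zero => simp
  | succ k ih => rw [pow_succ, IsUpperTriangular.mul_apply_self (hT.pow k) hT, ih, pow_succ]

end Triangular

section DiagCons

variable {R : Type*} {d : ℕ}

/-- The block-diagonal matrix `a ⊕ W`. -/
def diagCons [Zero R] (a : R) (W : Matrix (Fin d) (Fin d) R) :
    Matrix (Fin (d + 1)) (Fin (d + 1)) R :=
  of (Fin.cons (Fin.cons a 0) fun i => Fin.cons 0 (W i))

section

variable [Zero R] (a : R) (W : Matrix (Fin d) (Fin d) R)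

@[simp] lemma diagCons_zero_zero : diagCons a W 0 0 = a := rfl
@[simp] lemma diagCons_zero_succ (j : Fin d) : diagCons a W 0 j.succ = 0 := rfl
@[simp] lemma diagCons_succ_zero (i : Fin d) : diagCons a W i.succ 0 = 0 := rfl
@[simp] lemma diagCons_succ_succ (i j : Fin d) : diagCons a W i.succ j.succ = W i j := rfl

end

lemma star_diagCons [AddMonoid R] [StarAddMonoid R] (a : R) (W : Matrix (Fin d) (Fin d) R) :
    star (diagCons a W) = diagCons (star a) (star W) := by
  ext i j
  cases i using Fin.cases <;> cases j using Fin.cases <;> simp [star_apply]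

lemma diagCons_mul_diagCons [NonUnitalNonAssocSemiring R] (a b : R)
    (W V : Matrix (Fin d) (Fin d) R) :
    diagCons a W * diagCons b V = diagCons (a * b) (W * V) := by
  ext i j
  cases i using Fin.cases <;> cases j using Fin.cases <;> simp [mul_apply, Fin.sum_univ_succ]

lemma diagCons_one_one [NonAssocSemiring R] :
    diagCons (1 : R) (1 : Matrix (Fin d) (Fin d) R) = 1 := by
  ext i j
  cases i using Fin.cases <;> cases j using Fin.cases <;> simp [one_apply, eq_comm]

lemma isUpperTriangular_of_succ [Zero R] {T : Matrix (Fin (d + 1)) (Fin (d + 1)) R}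
    (h0 : ∀ i : Fin d, T i.succ 0 = 0) (h : (T.submatrix Fin.succ Fin.succ).IsUpperTriangular) :
    T.IsUpperTriangular := by
  intro i j hji
  cases i using Fin.cases with
  | zero => exact absurd hji (Fin.not_lt_zero j)
  | succ i =>
    cases j using Fin.cases with
    | zero => exact h0 i
    | succ j => exact h (Fin.succ_lt_succ_iff.1 hji)

end DiagCons

section Schur

variable {d : ℕ}

lemma exists_mem_unitaryGroup_mulVec_single_eq {ι 𝕜 : Type*} [Fintype ι] [DecidableEq ι]
    [RCLike 𝕜] (i : ι) {v : EuclideanSpace 𝕜 ι} (hv : ‖v‖ = 1) :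
    ∃ U ∈ unitaryGroup ι 𝕜, U *ᵥ Pi.single i 1 = ⇑v := by
  have hon : Orthonormal 𝕜 (Set.domRestrict {i} fun _ : ι => v) := by
    rw [orthonormal_iff_ite]
    rintro ⟨j, rfl⟩ ⟨k, rfl⟩
    simp [Set.domRestrict_apply, inner_self_eq_norm_sq_to_K, hv]
  obtain ⟨b, hb⟩ := hon.exists_orthonormalBasis_extension_of_card_eq (by simp)
  refine ⟨_, (EuclideanSpace.basisFun ι 𝕜).toMatrix_orthonormalBasis_mem_unitary b, ?_⟩
  ext j
  simp [Module.Basis.toMatrix_apply, hb i rfl]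

lemma exists_mem_unitaryGroup_conj_apply_succ_zero (Z : Matrix (Fin (d + 1)) (Fin (d + 1)) ℂ) :
    ∃ U ∈ unitaryGroup (Fin (d + 1)) ℂ, ∀ i : Fin d, (star U * Z * U) i.succ 0 = 0 := by
  obtain ⟨μ, hμ⟩ := Module.End.exists_eigenvalue (toEuclideanLin Z)
  obtain ⟨v, hv⟩ := hμ.exists_hasEigenvector
  obtain ⟨U, hU, hUv⟩ :=
    exists_mem_unitaryGroup_mulVec_single_eq 0 (norm_smul_inv_norm (𝕜 := ℂ) hv.2)
  refine ⟨U, hU, fun i => ?_⟩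
  have hZv : Z *ᵥ v = μ • ⇑v := by simpa using congrArg WithLp.ofLp hv.apply_eq_smul
  have hZ : Z *ᵥ (U *ᵥ Pi.single 0 1) = μ • U *ᵥ Pi.single 0 1 := by
    rw [hUv, WithLp.ofLp_smul, mulVec_smul, hZv, smul_comm]
  have hconj : (star U * Z * U) *ᵥ Pi.single 0 1 = μ • Pi.single 0 1 := by
    rw [← mulVec_mulVec, ← mulVec_mulVec, hZ, mulVec_smul, mulVec_mulVec,
      (mem_unitaryGroup_iff').1 hU, one_mulVec]
  simpa [mulVec_single_one] using congrFun hconj i.succ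

lemma diagCons_one_mem_unitaryGroup {W : Matrix (Fin d) (Fin d) ℂ}
    (hW : W ∈ unitaryGroup (Fin d) ℂ) : diagCons 1 W ∈ unitaryGroup (Fin (d + 1)) ℂ := by
  rw [mem_unitaryGroup_iff', star_diagCons, diagCons_mul_diagCons, (mem_unitaryGroup_iff').1 hW,
    star_one, mul_one, diagCons_one_one]

lemma conj_diagCons_apply_succ_zero (M : Matrix (Fin (d + 1)) (Fin (d + 1)) ℂ)
    (hM : ∀ i : Fin d, M i.succ 0 = 0) (W : Matrix (Fin d) (Fin d) ℂ) (i : Fin d) :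
    (star (diagCons 1 W) * M * diagCons 1 W) i.succ 0 = 0 := by
  simp [star_diagCons, mul_apply, Fin.sum_univ_succ, hM]

lemma submatrix_conj_diagCons (M : Matrix (Fin (d + 1)) (Fin (d + 1)) ℂ)
    (W : Matrix (Fin d) (Fin d) ℂ) :
    (star (diagCons 1 W) * M * diagCons 1 W).submatrix Fin.succ Fin.succ =
      star W * M.submatrix Fin.succ Fin.succ * W := by
  ext i j
  simp [star_diagCons, mul_apply, Fin.sum_univ_succ]

theorem exists_mem_unitaryGroup_isUpperTriangular :
    ∀ {d : ℕ} (Z : Matrix (Fin d) (Fin d) ℂ),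
      ∃ U ∈ unitaryGroup (Fin d) ℂ, (star U * Z * U).IsUpperTriangular
  | 0, _ => ⟨1, one_mem _, fun i => i.elim0⟩
  | _ + 1, Z => by
    obtain ⟨U, hU, hcol⟩ := exists_mem_unitaryGroup_conj_apply_succ_zero Z
    obtain ⟨W, hW, hT⟩ :=
      exists_mem_unitaryGroup_isUpperTriangular ((star U * Z * U).submatrix Fin.succ Fin.succ)
    refine ⟨U * diagCons 1 W, mul_mem hU (diagCons_one_mem_unitaryGroup hW), ?_⟩
    have hassoc : star (U * diagCons 1 W) * Z * (U * diagCons 1 W) =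
        star (diagCons 1 W) * (star U * Z * U) * diagCons 1 W := by
      simp only [star_mul, Matrix.mul_assoc]
    rw [hassoc]
    exact isUpperTriangular_of_succ (conj_diagCons_apply_succ_zero _ hcol W)
      (by rwa [submatrix_conj_diagCons])

end Schur

section TracePower

variable {ι : Type*} [Fintype ι]

lemma trace_reindex {κ R : Type*} [Fintype κ] [AddCommMonoid R] (e : ι ≃ κ) (X : Matrix ι ι R) :
    (reindex e e X).trace = X.trace :=
  e.symm.sum_comp fun i => X i i

variable [DecidableEq ι]

lemma sum_normSq_row_eq_one {U : Matrix ι ι ℂ} (hU : U ∈ unitaryGroup ι ℂ) (i : ι) :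
    ∑ j, Complex.normSq (U i j) = 1 := by
  have h := congrFun (congrFun ((mem_unitaryGroup_iff).1 hU) i) i
  simp only [mul_apply, star_apply, RCLike.star_def, Complex.mul_conj, one_apply_eq] at h
  exact_mod_cast h

lemma sum_normSq_col_eq_one {U : Matrix ι ι ℂ} (hU : U ∈ unitaryGroup ι ℂ) (j : ι) :
    ∑ i, Complex.normSq (U i j) = 1 := by
  simpa [star_apply] using sum_normSq_row_eq_one (Unitary.star_mem hU) j

lemma trace_conjStarAlgAut (U : unitaryGroup ι ℂ) (X : Matrix ι ι ℂ) :
    (Unitary.conjStarAlgAut ℂ _ U X).trace = X.trace := by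
  rw [Unitary.conjStarAlgAut_apply, trace_mul_cycle, Unitary.coe_star_mul_self, one_mul]

lemma PosSemidef.sum_re_diag_pow_le {M : Matrix ι ι ℂ} (hM : M.PosSemidef) (k : ℕ) :
    ∑ i, (M i i).re ^ k ≤ (M ^ k).trace.re := by
  obtain ⟨U, ev, hev, rfl⟩ : ∃ (U : unitaryGroup ι ℂ) (ev : ι → ℝ), (∀ j, 0 ≤ ev j) ∧
      M = Unitary.conjStarAlgAut ℂ _ U (diagonal (RCLike.ofReal ∘ ev)) :=
    ⟨_, _, hM.eigenvalues_nonneg, hM.1.spectral_theorem⟩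
  set M := Unitary.conjStarAlgAut ℂ _ U (diagonal (RCLike.ofReal ∘ ev)) with hM
  have hdiag : ∀ i, (M i i).re = ∑ j, Complex.normSq ((U : Matrix ι ι ℂ) i j) * ev j := by
    intro i
    rw [hM, Unitary.conjStarAlgAut_apply, mul_apply, Complex.re_sum]
    refine Finset.sum_congr rfl fun j _ => ?_
    rw [mul_diagonal, star_apply, RCLike.star_def, mul_right_comm, Complex.mul_conj]
    simp
  calc ∑ i, (M i i).re ^ k
      = ∑ i, (∑ j, Complex.normSq ((U : Matrix ι ι ℂ) i j) * ev j) ^ k := by simp only [hdiag]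
    _ ≤ ∑ i, ∑ j, Complex.normSq ((U : Matrix ι ι ℂ) i j) * ev j ^ k := by
        refine Finset.sum_le_sum fun i _ => ?_
        simpa using (convexOn_pow k).map_sum_le (fun j _ => Complex.normSq_nonneg _)
          (sum_normSq_row_eq_one U.2 i) fun j _ => hev j
    _ = ∑ j, ev j ^ k := by
        rw [Finset.sum_comm]
        simp [← Finset.sum_mul, sum_normSq_col_eq_one U.2]
    _ = (M ^ k).trace.re := by
        rw [hM, ← map_pow, trace_conjStarAlgAut, diagonal_pow, trace_diagonal, Complex.re_sum]
        simp [← Complex.ofReal_pow]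

lemma IsUpperTriangular.re_trace_pow_two_mul_le [LinearOrder ι] {T : Matrix ι ι ℂ}
    (hT : T.IsUpperTriangular) (k : ℕ) :
    (T ^ (2 * k)).trace.re ≤ ((Tᴴ * T) ^ k).trace.re := by
  have hdiag : ∀ i, Complex.normSq (T i i) ≤ ((Tᴴ * T) i i).re := by
    intro i
    have hcol : ((Tᴴ * T) i i).re = ∑ j, Complex.normSq (T j i) := by
      simp [mul_apply, Complex.re_sum, Complex.normSq_apply, mul_comm]
    rw [hcol]
    exact Finset.single_le_sum (f := fun j => Complex.normSq (T j i))
      (fun j _ => Complex.normSq_nonneg _) (Finset.mem_univ i)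
  calc (T ^ (2 * k)).trace.re = ∑ i, (T i i ^ (2 * k)).re := by
        simp [trace, hT.pow_apply_self, Complex.re_sum]
    _ ≤ ∑ i, Complex.normSq (T i i) ^ k := by
        refine Finset.sum_le_sum fun i _ => ?_
        calc (T i i ^ (2 * k)).re ≤ ‖T i i ^ (2 * k)‖ := Complex.re_le_norm _
          _ = Complex.normSq (T i i) ^ k := by rw [norm_pow, pow_mul, Complex.sq_norm]
    _ ≤ ∑ i, ((Tᴴ * T) i i).re ^ k :=
        Finset.sum_le_sum fun i _ => pow_le_pow_left₀ (Complex.normSq_nonneg _) (hdiag i) k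
    _ ≤ ((Tᴴ * T) ^ k).trace.re := (posSemidef_conjTranspose_mul_self T).sum_re_diag_pow_le k

lemma re_trace_pow_two_mul_le_of_map {κ F : Type*} [Fintype κ] [DecidableEq κ]
    [FunLike F (Matrix ι ι ℂ) (Matrix κ κ ℂ)] [MonoidHomClass F (Matrix ι ι ℂ) (Matrix κ κ ℂ)]
    (ψ : F) (hstar : ∀ X, ψ Xᴴ = (ψ X)ᴴ) (htrace : ∀ X, (ψ X).trace = X.trace)
    {Z : Matrix ι ι ℂ} {k : ℕ} (h : (ψ Z ^ (2 * k)).trace.re ≤ (((ψ Z)ᴴ * ψ Z) ^ k).trace.re) :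
    (Z ^ (2 * k)).trace.re ≤ ((Zᴴ * Z) ^ k).trace.re := by
  rwa [← hstar, ← map_mul, ← map_pow, ← map_pow, htrace, htrace] at h

lemma re_trace_pow_two_mul_le_of_fin {d : ℕ} (Z : Matrix (Fin d) (Fin d) ℂ) (k : ℕ) :
    (Z ^ (2 * k)).trace.re ≤ ((Zᴴ * Z) ^ k).trace.re := by
  obtain ⟨U, hU, hT⟩ := exists_mem_unitaryGroup_isUpperTriangular Z
  refine re_trace_pow_two_mul_le_of_map (Unitary.conjStarAlgAut ℂ _ (star ⟨U, hU⟩))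
    (fun X => map_star _ X) (trace_conjStarAlgAut _) ?_
  simpa [Unitary.conjStarAlgAut_apply, Matrix.mul_assoc] using hT.re_trace_pow_two_mul_le k

theorem re_trace_pow_two_mul_le (Z : Matrix ι ι ℂ) (k : ℕ) :
    (Z ^ (2 * k)).trace.re ≤ ((Zᴴ * Z) ^ k).trace.re :=
  re_trace_pow_two_mul_le_of_map (reindexAlgEquiv ℂ ℂ (Fintype.equivFin ι))
    (fun X => (conjTranspose_reindex _ _ X).symm) (trace_reindex _)
    (re_trace_pow_two_mul_le_of_fin _ k)

end TracePower

section BlockShift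

variable {κ R : Type*} {N : ℕ}

def blockShift [Zero R] (C : ZMod N → Matrix κ κ R) (s : ZMod N) :
    Matrix (κ × ZMod N) (κ × ZMod N) R :=
  of fun p q => if q.2 = p.2 + s then C p.2 p.1 q.1 else 0

def cycProd [Monoid R] (C : ZMod N → R) (p : ℕ) (i : ZMod N) : R :=
  (List.ofFn fun j : Fin p => C (i + j)).prod

lemma blockShift_zero [Zero R] (C : ZMod N → Matrix κ κ R) :
    blockShift C 0 = blockDiagonal C := by
  ext ⟨a, i⟩ ⟨b, j⟩
  simp [blockShift, blockDiagonal_apply, eq_comm]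

lemma blockShift_mul [Fintype κ] [NeZero N] [Semiring R] (C D : ZMod N → Matrix κ κ R)
    (s t : ZMod N) :
    blockShift C s * blockShift D t = blockShift (fun i => C i * D (i + s)) (s + t) := by
  ext ⟨a, i⟩ ⟨b, j⟩
  simp only [mul_apply, Fintype.sum_prod_type, blockShift, of_apply, ite_mul, zero_mul,
    Finset.sum_ite_eq', Finset.mem_univ, if_true, add_assoc]
  by_cases hj : j = i + (s + t) <;> simp [hj]

lemma conjTranspose_blockShift [Semiring R] [StarRing R] (C : ZMod N → Matrix κ κ R)
    (s : ZMod N) : (blockShift C s)ᴴ = blockShift (fun i => (C (i - s))ᴴ) (-s) := by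
  ext ⟨a, i⟩ ⟨b, j⟩
  simp only [conjTranspose_apply, blockShift, of_apply]
  by_cases h : i = j + s
  · subst h
    simp
  · have h' : ¬j = i + -s := fun h' => h (by rw [h']; ring)
    simp [h, h']

@[simp] lemma cycProd_zero [Monoid R] (C : ZMod N → R) (i : ZMod N) : cycProd C 0 i = 1 := rfl

lemma cycProd_succ [Monoid R] (C : ZMod N → R) (p : ℕ) (i : ZMod N) :
    cycProd C (p + 1) i = cycProd C p i * C (i + p) := by
  rw [cycProd, cycProd, List.ofFn_succ', List.concat_eq_append, List.prod_append]
  simp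

lemma cycProd_succ' [Monoid R] (C : ZMod N → R) (p : ℕ) (i : ZMod N) :
    cycProd C (p + 1) i = C i * cycProd C p (i + 1) := by
  simp [cycProd, List.ofFn_succ, add_assoc, add_comm (1 : ZMod N)]

lemma blockShift_pow [Fintype κ] [DecidableEq κ] [NeZero N] [Semiring R]
    (C : ZMod N → Matrix κ κ R) (p : ℕ) :
    blockShift C 1 ^ p = blockShift (cycProd C p) p := by
  induction p with
  | zero => rw [pow_zero, Nat.cast_zero, blockShift_zero]; exact blockDiagonal_one.symm
  | succ p ih =>
    rw [pow_succ, ih, blockShift_mul, Nat.cast_succ]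
    congr 1
    funext i
    exact (cycProd_succ C p i).symm

lemma trace_cycProd_add_one [Fintype κ] [DecidableEq κ] [CommSemiring R] (C : ZMod N → Matrix κ κ R) {p : ℕ}
    (hp : (p : ZMod N) = 0) (i : ZMod N) :
    (cycProd C p (i + 1)).trace = (cycProd C p i).trace := by
  cases p with
  | zero => simp
  | succ M =>
    have hwrap : i + 1 + (M : ZMod N) = i := by
      rw [add_assoc, add_comm 1, ← Nat.cast_succ, hp, add_zero]
    rw [cycProd_succ, hwrap, trace_mul_comm, ← cycProd_succ']

lemma trace_cycProd_eq [Fintype κ] [DecidableEq κ] [NeZero N] [CommSemiring R] (C : ZMod N → Matrix κ κ R)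
    (i : ZMod N) : (cycProd C N i).trace = (cycProd C N 0).trace := by
  rw [← ZMod.natCast_zmod_val i]
  induction i.val with
  | zero => simp
  | succ v ih => rw [Nat.cast_succ, trace_cycProd_add_one C (ZMod.natCast_self N), ih]

end BlockShift

section CyclicProduct

variable {ι : Type*} [Fintype ι] [DecidableEq ι] {N k : ℕ} [NeZero N]

theorem natCast_mul_re_trace_cycProd_le (hN : N = 2 * k) (C : ZMod N → Matrix ι ι ℂ) :
    N * (cycProd C N 0).trace.re ≤ ∑ i, (((C i)ᴴ * C i) ^ k).trace.re := by
  have h := re_trace_pow_two_mul_le (blockShift C 1) k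
  rw [← hN, blockShift_pow, ZMod.natCast_self, blockShift_zero, trace_blockDiagonal,
    conjTranspose_blockShift, blockShift_mul, neg_add_cancel, blockShift_zero,
    ← blockDiagonal_pow, trace_blockDiagonal] at h
  simp only [trace_cycProd_eq, Finset.sum_const, Finset.card_univ, ZMod.card, Complex.re_sum,
    Pi.pow_apply, ← sub_eq_add_neg] at h
  rw [← (Equiv.subRight (1 : ZMod N)).sum_comp]
  simpa using h

theorem natCast_mul_re_trace_prod_ofFn_le (hN : N = 2 * k) (F : Fin N → Matrix ι ι ℂ) :
    N * (List.ofFn F).prod.trace.re ≤ ∑ j, (((F j)ᴴ * F j) ^ k).trace.re := by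
  have hprod : cycProd (fun i : ZMod N => F ⟨i.val, i.val_lt⟩) N 0 = (List.ofFn F).prod := by
    simp only [cycProd, zero_add, ZMod.val_natCast]
    exact congrArg List.prod
      (List.ofFn_inj.2 (funext fun j => congrArg F (Fin.ext (Nat.mod_eq_of_lt j.2))))
  have h := natCast_mul_re_trace_cycProd_le hN fun i : ZMod N => F ⟨i.val, i.val_lt⟩
  rwa [hprod, ZMod.sum_comp_mk_val fun j => (((F j)ᴴ * F j) ^ k).trace.re] at h

theorem natCast_mul_re_trace_mul_prod_ofFn_le (hN : N = 2 * k) {V : Matrix ι ι ℂ}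
    (hV : V ∈ unitaryGroup ι ℂ) (F : Fin N → Matrix ι ι ℂ) :
    N * (V * (List.ofFn F).prod).trace.re ≤ ∑ j, (((F j)ᴴ * F j) ^ k).trace.re := by
  obtain ⟨M, rfl⟩ : ∃ M, N = M + 1 := Nat.exists_eq_succ_of_ne_zero (NeZero.ne N)
  -- absorb `V` into the first factor; this leaves its Gram matrix unchanged
  have hprod : (List.ofFn (Function.update F 0 (V * F 0))).prod = V * (List.ofFn F).prod := by
    simp [List.ofFn_succ, Matrix.mul_assoc]
  have hgram : ∀ j, (Function.update F 0 (V * F 0) j)ᴴ * Function.update F 0 (V * F 0) j =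
      (F j)ᴴ * F j := by
    intro j
    rcases eq_or_ne j 0 with rfl | hj
    · rw [Function.update_self, conjTranspose_mul, Matrix.mul_assoc, ← Matrix.mul_assoc Vᴴ,
        ← star_eq_conjTranspose V, (mem_unitaryGroup_iff').1 hV, Matrix.one_mul]
    · rw [Function.update_of_ne hj]
  simpa only [hprod, hgram] using
    natCast_mul_re_trace_prod_ofFn_le hN (Function.update F 0 (V * F 0))

end CyclicProduct

section Abs

variable {ι : Type*} [Fintype ι]

lemma IsHermitian.ofReal_re_trace {X : Matrix ι ι ℂ} (hX : X.IsHermitian) :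
    (X.trace.re : ℂ) = X.trace := by
  rw [← Complex.conj_eq_iff_re, ← Complex.star_def, ← trace_conjTranspose, hX.eq]

variable [DecidableEq ι]

lemma exists_mem_unitaryGroup_mul_eq_abs {X : Matrix ι ι ℂ} (hX : IsUnit X) :
    ∃ V ∈ unitaryGroup ι ℂ, V * X = CFC.abs X := by
  have hdet := (isUnit_iff_isUnit_det X).1 hX
  have hR : star (CFC.abs X) = CFC.abs X := (CFC.abs_nonneg X).isSelfAdjoint
  refine ⟨CFC.abs X * X⁻¹, ?_, by rw [Matrix.mul_assoc, nonsing_inv_mul _ hdet, Matrix.mul_one]⟩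
  rw [mem_unitaryGroup_iff', star_mul, hR, Matrix.mul_assoc, ← Matrix.mul_assoc (CFC.abs X),
    CFC.abs_mul_abs, star_eq_conjTranspose, star_eq_conjTranspose, conjTranspose_nonsing_inv,
    ← Matrix.mul_assoc, ← Matrix.mul_assoc, nonsing_inv_mul _ (by simpa using hdet.star),
    Matrix.one_mul, mul_nonsing_inv _ hdet]

theorem natCast_mul_re_trace_abs_prod_le {m : ℕ} (hm : 0 < m) (A : Fin m → Matrix ι ι ℂ)
    (hA : ∀ i, (A i).PosDef) :
    m * (CFC.abs (List.ofFn A).prod).trace.re ≤ ∑ i, (A i ^ m).trace.re := by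
  have : NeZero (m * 2) := ⟨by omega⟩
  have hX : IsUnit (List.ofFn A).prod := List.prod_isUnit fun Y hY => by
    obtain ⟨i, rfl⟩ := List.mem_ofFn.1 hY
    exact (hA i).isUnit
  obtain ⟨V, hV, hVX⟩ := exists_mem_unitaryGroup_mul_eq_abs hX
  have hsq : ∀ i, CFC.sqrt (A i) * CFC.sqrt (A i) = A i := fun i =>
    CFC.sqrt_mul_sqrt_self _ (hA i).posSemidef.nonneg
  have hgram : ∀ i, (CFC.sqrt (A i))ᴴ * CFC.sqrt (A i) = A i := fun i => by
    rw [← star_eq_conjTranspose, (CFC.sqrt_nonneg (A i)).isSelfAdjoint.star_eq, hsq]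
  have key := natCast_mul_re_trace_mul_prod_ofFn_le (mul_comm m 2) hV
    fun j => CFC.sqrt (A j.divNat)
  rw [List.prod_ofFn_divNat_two fun i => CFC.sqrt (A i)] at key
  simp only [hsq, hgram, hVX] at key
  rw [Fin.sum_divNat fun i => (A i ^ m).trace.re, nsmul_eq_mul] at key
  push_cast at key
  linarith

end Abs

end Matrix

lemma matAbs_eq_abs {n : ℕ} (X : Matrix (Fin n) (Fin n) ℂ) : matAbs X = CFC.abs X := by
  rw [CFC.abs, CFC.sqrt_eq_real_sqrt _ (star_mul_self_nonneg X), cfcₙ_eq_cfc,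
    star_eq_conjTranspose, (posSemidef_conjTranspose_mul_self X).1.cfc_eq]
  rfl

/-- For positive definite `A₁, …, A_m`,
`tr(|A₁ ⋯ A_m|) ≤ tr((A₁^m + ⋯ + A_m^m)/m)` (with the complex order on the traces). -/
theorem stmt19 {n m : ℕ} (hm : 0 < m) (A : Fin m → Matrix (Fin n) (Fin n) ℂ)
    (hA : ∀ i, (A i).PosDef) :
    (matAbs (List.ofFn A).prod).trace ≤ ((m : ℂ)⁻¹ • ∑ i, A i ^ m).trace := by
  have hR : (matAbs (List.ofFn A).prod).IsHermitian := by
    rw [matAbs_eq_abs]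
    exact (CFC.abs_nonneg _).posSemidef.isHermitian
  have hre : (matAbs (List.ofFn A).prod).trace.re ≤ (m : ℝ)⁻¹ * ∑ i, (A i ^ m).trace.re := by
    rw [le_inv_mul_iff₀ (by positivity), matAbs_eq_abs]
    exact natCast_mul_re_trace_abs_prod_le hm A hA
  rw [← hR.ofReal_re_trace, trace_smul, trace_sum, smul_eq_mul,
    ← Finset.sum_congr rfl fun i _ => ((hA i).posSemidef.pow m).isHermitian.ofReal_re_trace]
  rwa [← Complex.ofReal_natCast, ← Complex.ofReal_inv, ← Complex.ofReal_sum, ← Complex.ofReal_mul,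
    Complex.real_le_real]
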